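/- arXiv:1706.04432 — 5 statements merged into one kernel-verified Lean document; each statement's English description precedes it below -/
import Mathlib

section
/- For natural numbers N ≥ 1 and D ≥ 1 with D dividing N, we have (N/D)!^D · D^N ≤ (N+D-1)!/(D-1)!. -/
open Nat

lemma factorial_block_aux (E : ℕ) : ∀ M : ℕ,
    M ! ^ (E + 1) * (E + 1) ^ (M * (E + 1)) * E ! ≤ (M * (E + 1) + E)!
  | 0 => by simp
  | M + 1 => by
    have key : (M * (E + 1) + E)! * ((M * (E + 1) + E) + 1).ascFactorial (E + 1)
        = ((M + 1) * (E + 1) + E)! := by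
      rw [Nat.factorial_mul_ascFactorial]
      ring_nf
    have hasc : ((M + 1) * (E + 1)) ^ (E + 1)
        ≤ ((M * (E + 1) + E) + 1).ascFactorial (E + 1) := by
      have : (M * (E + 1) + E) + 1 = (M + 1) * (E + 1) := by ring
      rw [this]
      exact Nat.pow_succ_le_ascFactorial _ _
    calc (M + 1)! ^ (E + 1) * (E + 1) ^ ((M + 1) * (E + 1)) * E !
        = ((M + 1) * (E + 1)) ^ (E + 1) *
            (M ! ^ (E + 1) * (E + 1) ^ (M * (E + 1)) * E !) := by
          rw [Nat.factorial_succ]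
          rw [Nat.mul_pow, Nat.mul_pow]
          ring_nf
      _ ≤ ((M * (E + 1) + E) + 1).ascFactorial (E + 1) * (M * (E + 1) + E)! :=
          Nat.mul_le_mul hasc (factorial_block_aux E M)
      _ = ((M + 1) * (E + 1) + E)! := by rw [Nat.mul_comm]; exact key

theorem factorial_block_bound (N D : ℕ) (hN : 1 ≤ N) (hD : 1 ≤ D) (hdvd : D ∣ N) :
    Nat.factorial (N / D) ^ D * D ^ N ≤
      Nat.factorial (N + D - 1) / Nat.factorial (D - 1) := by
  obtain ⟨E, rfl⟩ := Nat.exists_eq_add_of_le hD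
  set M := N / (1 + E) with hM
  have hNe : N = M * (1 + E) := (Nat.div_mul_cancel hdvd).symm
  rw [Nat.le_div_iff_mul_le (Nat.factorial_pos _)]
  have := factorial_block_aux E M
  have h1 : (1 : ℕ) + E - 1 = E := by omega
  rw [h1, hNe]
  have h2 : M * (1 + E) + (1 + E) - 1 = M * (E + 1) + E := by
    rw [Nat.add_comm 1 E]; omega
  rw [h2]
  calc M ! ^ (1 + E) * (1 + E) ^ (M * (1 + E)) * E !
      = M ! ^ (E + 1) * (E + 1) ^ (M * (E + 1)) * E ! := by ring_nf
    _ ≤ (M * (E + 1) + E)! := this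
end

section
/- Let D ≥ 2 be an integer and let N_1,…,N_D ≥ 0 be integers with ∑_a N_a = N ≥ 1, and suppose D divides N. Define H(m_1,…,m_r) = ∑_{i: m_i>0} m_i log((∑ m_j)/m_i) and K(m_1,…,m_r) = ∑_i log* m_i − log*(∑_i m_i) with log* as above. Then H(N,D−1) − K(N_1,…,N_D,D−1) ≥ log((N+D−1)!) − log((D−1)!) − D·log((N/D)!) − N log D ≥ 0. -/
/-- `log* 0 = 0` and `log* n = log n! - n log n + n` for `n ≥ 1`. -/
noncomputable def logStar (n : ℕ) : ℝ :=
  if n = 0 then 0 else Real.log (Nat.factorial n) - n * Real.log n + n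

noncomputable def fnn (k : ℕ) : ℝ := (k : ℝ) * Real.log (((k : ℝ) + 1) / k)

lemma g_mono : MonotoneOn (fun t : ℝ => t * Real.log (t + 1) - t * Real.log t) (Set.Ici 0) := by
  apply StrictMonoOn.monotoneOn
  apply strictMonoOn_of_deriv_pos (convex_Ici 0)
  · apply ContinuousOn.sub
    · apply ContinuousOn.mul continuousOn_id
      intro t ht
      exact (Real.continuousAt_log (by simp at ht; show t + 1 ≠ 0; exact ne_of_gt (by linarith))).comp
        (continuousAt_id.add continuousAt_const) |>.continuousWithinAt
    · exact Real.continuous_mul_log.continuousOn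
  · intro t ht
    rw [interior_Ici] at ht
    have ht0 : (0:ℝ) < t := ht
    have h1 : HasDerivAt (fun t : ℝ => t * Real.log (t + 1) - t * Real.log t)
        ((Real.log (t + 1) + t * (1 / (t + 1))) - (Real.log t + t * (1 / t))) t := by
      have ha : HasDerivAt (fun t : ℝ => t * Real.log (t + 1))
          (1 * Real.log (t + 1) + t * (1 / (t + 1))) t := by
        exact (hasDerivAt_id t).mul (((hasDerivAt_id t).add_const 1).log (by positivity))
      have hb : HasDerivAt (fun t : ℝ => t * Real.log t)
          (1 * Real.log t + t * t⁻¹) t :=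
        (hasDerivAt_id t).mul (Real.hasDerivAt_log ht0.ne')
      have : t * t⁻¹ = t * (1/t) := by ring
      rw [this] at hb
      exact (ha.sub hb).congr_deriv (by ring)
    rw [h1.deriv]
    have key : Real.log (t / (t + 1)) < t / (t + 1) - 1 :=
      Real.log_lt_sub_one_of_pos (by positivity) (by intro h; field_simp at h; linarith)
    rw [Real.log_div ht0.ne' (by positivity)] at key
    have e1 : t * (1/t) = 1 := by field_simp
    have e2 : t / (t + 1) - 1 = -(1/(t+1)) := by field_simp; ring
    have e3 : t * (1/(t+1)) = 1 - 1/(t+1) := by field_simp; ring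
    rw [e2] at key
    rw [e1, e3]
    linarith

lemma fnn_mono : Monotone fnn := by
  have hg : ∀ k : ℕ, fnn k = (k : ℝ) * Real.log ((k:ℝ) + 1) - (k:ℝ) * Real.log k := by
    intro k
    rcases Nat.eq_zero_or_pos k with h | h
    · simp [fnn, h]
    · rw [fnn, Real.log_div (by positivity) (by exact_mod_cast h.ne'), mul_sub]
  intro a b hab
  rw [hg a, hg b]
  exact g_mono (by simp) (by simp) (by exact_mod_cast hab)


lemma logStar_eq (n : ℕ) :
    logStar n = Real.log (Nat.factorial n) - n * Real.log n + n := by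
  rcases Nat.eq_zero_or_pos n with h | h
  · simp [logStar, h]
  · rw [logStar, if_neg h.ne']

lemma logStar_succ (k : ℕ) : logStar (k + 1) = logStar k + (1 - fnn k) := by
  rcases Nat.eq_zero_or_pos k with h | h
  · subst h; simp [logStar, fnn, Nat.factorial]
  · rw [logStar_eq, logStar_eq, fnn,
      Real.log_div (by positivity) (by exact_mod_cast h.ne')]
    rw [Nat.factorial_succ, Nat.cast_mul,
      Real.log_mul (by exact_mod_cast (Nat.succ_ne_zero k)) (by positivity)]
    push_cast
    ring

lemma logStar_upper (n d : ℕ) : logStar (n + d) ≤ logStar n + d * (1 - fnn n) := by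
  induction d with
  | zero => simp
  | succ d ih =>
    have h1 : fnn n ≤ fnn (n + d) := fnn_mono (Nat.le_add_right n d)
    have := logStar_succ (n + d)
    push_cast
    push_cast at ih
    rw [show n + (d + 1) = (n + d) + 1 from rfl, this]
    linarith

lemma logStar_lower (n d : ℕ) : logStar n + d * (1 - fnn (n + d)) ≤ logStar (n + d) := by
  induction d with
  | zero => simp
  | succ d ih =>
    have h1 : fnn (n + d) ≤ fnn (n + d + 1) := fnn_mono (by omega)
    have h2 := logStar_succ (n + d)
    have hd : (0:ℝ) ≤ (d:ℝ) + 1 := by positivity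
    push_cast
    push_cast at ih
    rw [show n + (d + 1) = (n + d) + 1 from rfl, h2]
    nlinarith [mul_le_mul_of_nonneg_left (sub_le_sub_left h1 1) hd]

lemma logStar_tangent (n m : ℕ) :
    logStar n ≤ logStar m + ((n : ℝ) - m) * (1 - fnn m) := by
  rcases le_total m n with h | h
  · obtain ⟨d, rfl⟩ := Nat.exists_eq_add_of_le h
    have := logStar_upper m d
    push_cast
    linarith
  · obtain ⟨d, rfl⟩ := Nat.exists_eq_add_of_le h
    have := logStar_lower n d
    push_cast
    linarith

lemma jensen (D : ℕ) (Na : Fin D → ℕ) (m : ℕ) (h : ∑ a, Na a = D * m) :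
    ∑ a, logStar (Na a) ≤ (D : ℝ) * logStar m := by
  have hcast : ∑ a, ((Na a : ℝ)) = (D : ℝ) * m := by
    rw [← Nat.cast_sum, h]; push_cast; ring
  calc ∑ a, logStar (Na a)
      ≤ ∑ a, (logStar m + ((Na a : ℝ) - m) * (1 - fnn m)) :=
        Finset.sum_le_sum fun a _ => logStar_tangent (Na a) m
    _ = (D : ℝ) * logStar m := by
        rw [Finset.sum_add_distrib, ← Finset.sum_mul, Finset.sum_sub_distrib,
          Finset.sum_const, Finset.card_fin, hcast]
        simp [mul_comm]

lemma pow_mul_factorial_le (n k b : ℕ) (hb : b ≤ n + 1) :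
    b ^ k * n.factorial ≤ (n + k).factorial := by
  induction k with
  | zero => simp
  | succ k ih =>
    have h1 : b ≤ n + k + 1 := by omega
    calc b ^ (k + 1) * n.factorial = b * (b ^ k * n.factorial) := by ring
      _ ≤ (n + k + 1) * (n + k).factorial :=
          Nat.mul_le_mul h1 ih
      _ = (n + (k + 1)).factorial := by
          rw [show n + (k+1) = (n + k) + 1 from rfl, Nat.factorial_succ]

lemma fact_ineq (D m : ℕ) (hD : 1 ≤ D) :
    (D - 1).factorial * m.factorial ^ D * D ^ (D * m) ≤ (D * m + (D - 1)).factorial := by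
  induction m with
  | zero => simp
  | succ m ih =>
    have key : (D * (m + 1)) ^ D * (D * m + (D - 1)).factorial
        ≤ (D * m + (D - 1) + D).factorial :=
      pow_mul_factorial_le _ _ _ (by have h9 : D * (m + 1) = D * m + D := Nat.mul_add_one D m ▸ rfl; omega)
    calc (D - 1).factorial * (m+1).factorial ^ D * D ^ (D * (m+1))
        = (D * (m + 1)) ^ D * ((D - 1).factorial * m.factorial ^ D * D ^ (D * m)) := by
          rw [Nat.factorial_succ, mul_pow, mul_pow, Nat.mul_succ, pow_add]
          ring
      _ ≤ (D * (m + 1)) ^ D * (D * m + (D - 1)).factorial :=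
          Nat.mul_le_mul_left _ ih
      _ ≤ (D * m + (D - 1) + D).factorial := key
      _ = (D * (m + 1) + (D - 1)).factorial := by
          congr 1; have h9 : D * (m + 1) = D * m + D := Nat.mul_add_one D m ▸ rfl; omega

theorem ppm_lower_bound_step (D : ℕ) (hD : 2 ≤ D) (Na : Fin D → ℕ) (N : ℕ)
    (hsum : ∑ a, Na a = N) (hN : 1 ≤ N) (hdvd : D ∣ N) :
    ((N : ℝ) * Real.log (1 + ((D : ℝ) - 1) / N) +
        ((D : ℝ) - 1) * Real.log (1 + (N : ℝ) / ((D : ℝ) - 1)) -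
      ((∑ a, logStar (Na a)) + logStar (D - 1) - logStar (N + D - 1)) ≥
      Real.log (Nat.factorial (N + D - 1)) - Real.log (Nat.factorial (D - 1)) -
        (D : ℝ) * Real.log (Nat.factorial (N / D)) - (N : ℝ) * Real.log D) ∧
    (Real.log (Nat.factorial (N + D - 1)) - Real.log (Nat.factorial (D - 1)) -
        (D : ℝ) * Real.log (Nat.factorial (N / D)) - (N : ℝ) * Real.log D ≥ 0) := by
  obtain ⟨m, hNm⟩ := hdvd
  have hD1 : 1 ≤ D := by omega
  have hm : 1 ≤ m := by
    rcases Nat.eq_zero_or_pos m with h | h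
    · subst h; simp at hNm; omega
    · exact h
  set d := D - 1 with hd_def
  have hd1 : 1 ≤ d := by omega
  have hM : N + D - 1 = N + d := by omega
  have hNdiv : N / D = m := by rw [hNm]; exact Nat.mul_div_cancel_left m (by omega)
  have hDR : ((D : ℝ) - 1) = (d : ℝ) := by
    rw [hd_def, Nat.cast_sub hD1, Nat.cast_one]
  have hNpos : (0 : ℝ) < N := by exact_mod_cast hN
  have hdpos : (0 : ℝ) < d := by exact_mod_cast hd1
  have hmpos : (0 : ℝ) < m := by exact_mod_cast hm
  have hDpos : (0 : ℝ) < D := by exact_mod_cast hD1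
  have h1 : Real.log (1 + (d : ℝ) / N) = Real.log ((N : ℝ) + d) - Real.log N := by
    rw [show (1 : ℝ) + (d:ℝ)/N = ((N:ℝ) + d)/N by field_simp,
      Real.log_div (by positivity) hNpos.ne']
  have h2 : Real.log (1 + (N : ℝ) / d) = Real.log ((N : ℝ) + d) - Real.log d := by
    rw [show (1 : ℝ) + (N:ℝ)/d = ((N:ℝ) + d)/d by field_simp; ring,
      Real.log_div (by positivity) hdpos.ne']
  have hlogN : Real.log N = Real.log D + Real.log m := by
    rw [show (N : ℝ) = (D : ℝ) * m by exact_mod_cast hNm]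
    exact Real.log_mul hDpos.ne' hmpos.ne'
  have hjen : ∑ a, logStar (Na a)
      ≤ (D : ℝ) * Real.log (m.factorial) - N * Real.log m + N := by
    have hj := jensen D Na m (hsum.trans hNm)
    rw [logStar_eq] at hj
    have hc : (N : ℝ) = (D : ℝ) * m := by exact_mod_cast hNm
    rw [hc]
    linarith
  have hfac2 : d.factorial * m.factorial ^ D * D ^ N ≤ (N + d).factorial := by
    rw [hd_def, hNm]
    exact fact_ineq D m hD1
  have hlogfac : Real.log (d.factorial) + D * Real.log (m.factorial)
      + N * Real.log D ≤ Real.log ((N + d).factorial) := by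
    have hcast : ((d.factorial : ℝ) * (m.factorial : ℝ) ^ D * (D : ℝ) ^ N)
        ≤ ((N + d).factorial : ℝ) := by exact_mod_cast hfac2
    have hlog := Real.log_le_log (by positivity) hcast
    rw [Real.log_mul (by positivity) (by positivity),
      Real.log_mul (by positivity) (by positivity),
      Real.log_pow, Real.log_pow] at hlog
    linarith
  constructor
  · rw [hM, hDR, h1, h2, hNdiv, logStar_eq (N + d), logStar_eq d]
    push_cast
    rw [hlogN]
    linarith
  · rw [hM, hNdiv]
    linarith
end

section
/- Let G: ℕ → ℝ be a function such that g = lim_{n→∞} G(n)/n exists and is finite, and define J(n) = 2G(n) − G(2n). Then the Hilberg exponent of n ↦ G(n) − n·g is at most the Hilberg exponent of J, where the Hilberg exponent of s is hilb(s) = limsup_{n→∞} log⁺(s(2^n)) / (n log 2), with log⁺ x = log(x+1) for x ≥ 0 and log⁺ x = 0 for x < 0. -/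
noncomputable def logPlus (x : ℝ) : ℝ := if 0 ≤ x then Real.log (x + 1) else 0

/-- The Hilberg exponent of a sequence. -/
noncomputable def hilb (s : ℕ → ℝ) : ℝ :=
  Filter.limsup (fun n : ℕ => logPlus (s (2 ^ n)) / (n * Real.log 2)) Filter.atTop

/-!
Write `a n = G (2^n)`, so that `J (2^n) = 2 a n - a (n+1)`. The excess telescopes,
`a n - 2^n g = ∑ₖ J (2^(n+k)) / 2^(k+1)`, the partial sums being `a n - a (n+m) / 2^m`.
If `hilb J < c < 1` then `J (2^m) ≤ (2^c)^m` for large `m`, and the geometric series gives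
`a n - 2^n g ≤ (2^c)^n / (2 - 2^c)`, hence `hilb (G - n g) ≤ c`. Exponents `c ≥ 1` cost nothing:
`G n - n g = o(n)` alone bounds the Hilberg exponent by `1`.
-/

open Filter Topology Finset

lemma logPlus_nonneg (x : ℝ) : 0 ≤ logPlus x := by
  unfold logPlus
  split_ifs
  · exact Real.log_nonneg (by linarith)
  · rfl

lemma logPlus_le_log_add_one {x M : ℝ} (hM : 0 ≤ M) (h : x ≤ M) :
    logPlus x ≤ Real.log (M + 1) := by
  unfold logPlus
  split_ifs
  · exact Real.log_le_log (by linarith) (by linarith)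
  · exact Real.log_nonneg (by linarith)

lemma log_lt_of_logPlus_lt {x y : ℝ} (hx : 0 ≤ x) (h : logPlus x < y) :
    Real.log (x + 1) < y := by
  rwa [logPlus, if_pos hx] at h

noncomputable def hilbSeq (s : ℕ → ℝ) (n : ℕ) : ℝ :=
  logPlus (s (2 ^ n)) / (n * Real.log 2)

lemma hilb_eq_limsup_hilbSeq (s : ℕ → ℝ) : hilb s = limsup (hilbSeq s) atTop := rfl

lemma hilbSeq_nonneg (s : ℕ → ℝ) (n : ℕ) : 0 ≤ hilbSeq s n :=
  div_nonneg (logPlus_nonneg _) (by positivity)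

/-- Also true when `hilbSeq s` is unbounded, since then `hilb s` is the junk value `sInf ∅ = 0`. -/
lemma hilb_nonneg (s : ℕ → ℝ) : 0 ≤ hilb s := by
  rw [hilb_eq_limsup_hilbSeq, limsup_eq]
  refine Real.sInf_nonneg fun a ha => ?_
  obtain ⟨n, hn⟩ := ha.exists
  exact (hilbSeq_nonneg s n).trans hn

lemma log_mul_pow_add_one_le {K c : ℝ} (hK : 0 ≤ K) (hc : 0 ≤ c) (n : ℕ) :
    Real.log (K * ((2 : ℝ) ^ c) ^ n + 1) ≤ Real.log (K + 1) + c * n * Real.log 2 := by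
  have hq : 1 ≤ ((2 : ℝ) ^ c) ^ n := one_le_pow₀ (Real.one_le_rpow one_le_two hc)
  calc Real.log (K * ((2 : ℝ) ^ c) ^ n + 1)
      ≤ Real.log ((K + 1) * ((2 : ℝ) ^ c) ^ n) :=
        Real.log_le_log (by positivity) (by nlinarith)
    _ = Real.log (K + 1) + c * n * Real.log 2 := by
        rw [Real.log_mul (by positivity) (by positivity), Real.log_pow, Real.log_rpow two_pos]
        ring

section Bounds

variable {s : ℕ → ℝ} {K c : ℝ}

lemma eventually_hilbSeq_le_of_le_mul_pow (hK : 0 ≤ K) (hc : 0 ≤ c)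
    (h : ∀ᶠ n in atTop, s (2 ^ n) ≤ K * ((2 : ℝ) ^ c) ^ n) {ε : ℝ} (hε : 0 < ε) :
    ∀ᶠ n in atTop, hilbSeq s n ≤ c + ε := by
  have hlog2 : 0 < Real.log 2 := Real.log_pos one_lt_two
  have hsmall : ∀ᶠ n : ℕ in atTop, Real.log (K + 1) ≤ ε * (n * Real.log 2) :=
    ((tendsto_natCast_atTop_atTop.atTop_mul_const hlog2).const_mul_atTop hε).eventually_ge_atTop _
  filter_upwards [h, hsmall, eventually_ge_atTop 1] with n hn hsmall hn1
  have hpos : 0 < (n : ℝ) * Real.log 2 := mul_pos (by exact_mod_cast hn1) hlog2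
  rw [hilbSeq, div_le_iff₀ hpos]
  calc logPlus (s (2 ^ n)) ≤ Real.log (K * ((2 : ℝ) ^ c) ^ n + 1) :=
        logPlus_le_log_add_one (by positivity) hn
    _ ≤ Real.log (K + 1) + c * n * Real.log 2 := log_mul_pow_add_one_le hK hc n
    _ ≤ (c + ε) * (n * Real.log 2) := by linarith

lemma hilb_le_of_le_mul_pow (hK : 0 ≤ K) (hc : 0 ≤ c)
    (h : ∀ᶠ n in atTop, s (2 ^ n) ≤ K * ((2 : ℝ) ^ c) ^ n) : hilb s ≤ c := by
  refine le_of_forall_pos_le_add fun ε hε => ?_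
  rw [hilb_eq_limsup_hilbSeq]
  exact limsup_le_of_le (isCoboundedUnder_le_of_le _ (hilbSeq_nonneg s))
    (eventually_hilbSeq_le_of_le_mul_pow hK hc h hε)

lemma eventually_le_two_pow_of_tendsto_div_two_pow
    (h : Tendsto (fun n => s (2 ^ n) / 2 ^ n) atTop (𝓝 0)) :
    ∀ᶠ n in atTop, s (2 ^ n) ≤ 1 * ((2 : ℝ) ^ (1 : ℝ)) ^ n := by
  filter_upwards [h.eventually (eventually_le_nhds one_pos)] with n hn
  rwa [Real.rpow_one, one_mul, ← div_le_one (by positivity)]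

lemma hilb_le_one_of_tendsto_div_two_pow (h : Tendsto (fun n => s (2 ^ n) / 2 ^ n) atTop (𝓝 0)) :
    hilb s ≤ 1 :=
  hilb_le_of_le_mul_pow zero_le_one zero_le_one (eventually_le_two_pow_of_tendsto_div_two_pow h)

lemma isBoundedUnder_hilbSeq_of_tendsto_div_two_pow
    (h : Tendsto (fun n => s (2 ^ n) / 2 ^ n) atTop (𝓝 0)) :
    IsBoundedUnder (· ≤ ·) atTop (hilbSeq s) :=
  isBoundedUnder_of_eventually_le <| eventually_hilbSeq_le_of_le_mul_pow zero_le_one zero_le_one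
    (eventually_le_two_pow_of_tendsto_div_two_pow h) one_pos

lemma eventually_le_pow_of_hilb_lt (hb : IsBoundedUnder (· ≤ ·) atTop (hilbSeq s))
    (h : hilb s < c) : ∀ᶠ n in atTop, s (2 ^ n) ≤ ((2 : ℝ) ^ c) ^ n := by
  have hlog2 : 0 < Real.log 2 := Real.log_pos one_lt_two
  rw [hilb_eq_limsup_hilbSeq] at h
  filter_upwards [eventually_lt_of_limsup_lt h hb, eventually_ge_atTop 1] with n hn hn1
  have hpos : 0 < (n : ℝ) * Real.log 2 := mul_pos (by exact_mod_cast hn1) hlog2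
  rcases lt_or_ge (s (2 ^ n)) 0 with hneg | hnonneg
  · exact hneg.le.trans (by positivity)
  rw [hilbSeq, div_lt_iff₀ hpos] at hn
  have hlog : Real.log (s (2 ^ n) + 1) < Real.log (((2 : ℝ) ^ c) ^ n) := by
    rw [Real.log_pow, Real.log_rpow two_pos]
    linarith [log_lt_of_logPlus_lt hnonneg hn]
  linarith [(Real.log_lt_log_iff (by linarith) (by positivity)).1 hlog]

end Bounds

section Dyadic

variable (a : ℕ → ℝ) {g : ℝ}

lemma sum_range_dyadic_defect (n m : ℕ) :
    ∑ k ∈ range m, (2 * a (n + k) - a (n + k + 1)) / 2 ^ (k + 1) = a n - a (n + m) / 2 ^ m := by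
  have hterm : ∀ k, (2 * a (n + k) - a (n + k + 1)) / 2 ^ (k + 1)
      = a (n + k) / 2 ^ k - a (n + (k + 1)) / 2 ^ (k + 1) := fun k => by
    rw [← add_assoc, pow_succ]; field_simp
  simp only [hterm, sum_range_sub' (fun k => a (n + k) / 2 ^ k), add_zero, pow_zero, div_one]

variable {a}

lemma tendsto_dyadic_defect_div_two_pow (ha : Tendsto (fun n => a n / 2 ^ n) atTop (𝓝 g)) :
    Tendsto (fun n => (2 * a n - a (n + 1)) / 2 ^ n) atTop (𝓝 0) := by
  have h := (ha.const_mul 2).sub ((ha.comp (tendsto_add_atTop_nat 1)).const_mul 2)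
  rw [sub_self] at h
  refine h.congr fun n => ?_
  simp only [Function.comp_apply, pow_succ]
  field_simp

lemma tendsto_excess_div_two_pow (ha : Tendsto (fun n => a n / 2 ^ n) atTop (𝓝 g)) :
    Tendsto (fun n => (a n - 2 ^ n * g) / 2 ^ n) atTop (𝓝 0) := by
  rw [← sub_self g]
  refine (ha.sub_const g).congr fun n => ?_
  field_simp

lemma tendsto_sum_range_dyadic_defect (ha : Tendsto (fun n => a n / 2 ^ n) atTop (𝓝 g)) (n : ℕ) :
    Tendsto (fun m => ∑ k ∈ range m, (2 * a (n + k) - a (n + k + 1)) / 2 ^ (k + 1)) atTop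
      (𝓝 (a n - 2 ^ n * g)) := by
  simp only [sum_range_dyadic_defect]
  refine tendsto_const_nhds.sub ?_
  have h := ((ha.comp (tendsto_add_atTop_nat n)).const_mul ((2 : ℝ) ^ n))
  refine h.congr fun m => ?_
  simp only [Function.comp_apply, add_comm m n, pow_add]
  field_simp

lemma sub_le_of_dyadic_defect_le (ha : Tendsto (fun n => a n / 2 ^ n) atTop (𝓝 g))
    {q : ℝ} (hq0 : 0 ≤ q) (hq2 : q < 2) {N : ℕ} (hJ : ∀ m ≥ N, 2 * a m - a (m + 1) ≤ q ^ m)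
    {n : ℕ} (hn : N ≤ n) : a n - 2 ^ n * g ≤ q ^ n / (2 - q) := by
  refine le_of_tendsto (tendsto_sum_range_dyadic_defect ha n) (Eventually.of_forall fun m => ?_)
  have hr0 : 0 ≤ q / 2 := by positivity
  have hr1 : q / 2 < 1 := by linarith
  calc ∑ k ∈ range m, (2 * a (n + k) - a (n + k + 1)) / 2 ^ (k + 1)
      ≤ ∑ k ∈ range m, q ^ n / 2 * (q / 2) ^ k := by
        refine sum_le_sum fun k _ => ?_
        calc (2 * a (n + k) - a (n + k + 1)) / 2 ^ (k + 1) ≤ q ^ (n + k) / 2 ^ (k + 1) :=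
              div_le_div_of_nonneg_right (hJ _ (by omega)) (by positivity)
          _ = q ^ n / 2 * (q / 2) ^ k := by rw [pow_add, pow_succ, div_pow]; ring
    _ = q ^ n / 2 * ∑ k ∈ Ico 0 m, (q / 2) ^ k := by rw [← mul_sum, range_eq_Ico]
    _ ≤ q ^ n / 2 * ((q / 2) ^ 0 / (1 - q / 2)) :=
        mul_le_mul_of_nonneg_left (geom_sum_Ico_le_of_lt_one hr0 hr1) (by positivity)
    _ = q ^ n / (2 - q) := by field_simp

end Dyadic

theorem hilberg_redundancy_le (G : ℕ → ℝ) (g : ℝ)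
    (hg : Filter.Tendsto (fun n : ℕ => G n / n) Filter.atTop (nhds g)) :
    hilb (fun n => G n - n * g) ≤ hilb (fun n => 2 * G n - G (2 * n)) := by
  set a : ℕ → ℝ := fun n => G (2 ^ n)
  have ha : Tendsto (fun n => a n / 2 ^ n) atTop (𝓝 g) := by
    refine (hg.comp (tendsto_pow_atTop_atTop_of_one_lt one_lt_two)).congr fun n => ?_
    simp [a]
  have hR : ∀ n, G (2 ^ n) - ((2 ^ n : ℕ) : ℝ) * g = a n - 2 ^ n * g := by simp [a]
  have hJ : ∀ n, 2 * G (2 ^ n) - G (2 * 2 ^ n) = 2 * a n - a (n + 1) := by simp [a, pow_succ']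
  have hR_le_one : hilb (fun n => G n - n * g) ≤ 1 :=
    hilb_le_one_of_tendsto_div_two_pow (by simpa only [hR] using tendsto_excess_div_two_pow ha)
  have hJ_bdd : IsBoundedUnder (· ≤ ·) atTop (hilbSeq fun n => 2 * G n - G (2 * n)) :=
    isBoundedUnder_hilbSeq_of_tendsto_div_two_pow
      (by simpa only [hJ] using tendsto_dyadic_defect_div_two_pow ha)
  refine le_of_forall_gt_imp_ge_of_dense fun c hc => ?_
  rcases le_or_gt 1 c with hc1 | hc1
  · exact hR_le_one.trans hc1
  obtain ⟨N, hN⟩ := (eventually_le_pow_of_hilb_lt hJ_bdd hc).exists_forall_of_atTop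
  have hq2 : (2 : ℝ) ^ c < 2 := by
    simpa using Real.rpow_lt_rpow_of_exponent_lt one_lt_two hc1
  refine hilb_le_of_le_mul_pow (one_div_pos.2 (sub_pos.2 hq2)).le ((hilb_nonneg _).trans hc.le)
    (eventually_atTop.2 ⟨N, fun n hn => ?_⟩)
  rw [hR, one_div_mul_eq_div]
  exact sub_le_of_dyadic_defect_le ha (by positivity) hq2 (fun m hm => hJ m ▸ hN m hm) hn
end

section
/- For the Santa Fe count U_n as above, with M_n = ⌈C n^{1/α}⌉ for a constant C > e·ζ(α)^{−1/α}, there exists δ > 0 such that P(U_n ≥ M_n) ≤ (C n^{1/α} + 2)·exp(−δ n^{1/α}) for all sufficiently large n; hence ∑_n P(U_n ≥ M_n) < ∞ and almost surely U_n < M_n eventually. -/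
open MeasureTheory ProbabilityTheory Filter

/-- The largest `l` such that every `1 ≤ k ≤ l` appears among `K 0, …, K (n-1)`. -/
noncomputable def santaU {Ω : Type*} (K : ℕ → Ω → ℕ) (n : ℕ) (ω : Ω) : ℕ :=
  sSup {l : ℕ | ∀ m : ℕ, 1 ≤ m → m ≤ l → ∃ i < n, K i ω = m}

/-!
If `U_n ≥ M`, each value `1, …, M` is taken by some `K_i` with `i < n`. A union bound over the
`n ^ M` choices of such indices, together with independence, bounds this by
`n ^ M ∏_{m ≤ M} m^{-α} / ζ = n ^ M / (M!^α ζ^M)`. For `M ≥ C n^{1/α}`, Stirling's bound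
`M! ≥ (M/e)^M` gives `M!^α ζ^M ≥ (c n)^M` with `c = ζ (C/e)^α`, and `c > 1` is exactly the
hypothesis on `C`; so the probability is at most `c^{-M} ≤ exp (-(C log c) n^{1/α})`. These
bounds are summable, and Borel–Cantelli gives the almost sure statement.
-/

open Real
open scoped ENNReal Nat

lemma exists_lt_eq_of_le_santaU {Ω : Type*} {K : ℕ → Ω → ℕ} {n M : ℕ} {ω : Ω}
    (hM : M ≤ santaU K n ω) {m : ℕ} (hm₁ : 1 ≤ m) (hmM : m ≤ M) : ∃ i < n, K i ω = m := by
  set S := {l : ℕ | ∀ m : ℕ, 1 ≤ m → m ≤ l → ∃ i < n, K i ω = m}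
  by_cases hS : BddAbove S
  · have h0 : 0 ∈ S := fun m h1 h2 => absurd (h1.trans h2) (by omega)
    exact Nat.sSup_mem ⟨0, h0⟩ hS m hm₁ (hmM.trans hM)
  · obtain ⟨l, hl, hMl⟩ := not_bddAbove_iff'.1 hS M
    exact hl m hm₁ (hmM.trans (le_of_not_ge hMl))

section UnionBound

variable {Ω β : Type*} [MeasurableSpace Ω] [MeasurableSpace β] [MeasurableSingletonClass β]
  {μ : Measure Ω} {K : ℕ → Ω → β}

/-- Distinct values force distinct indices, so independence applies to each term of the
union bound. -/
theorem measure_forall_exists_lt_eq_le (hK : iIndepFun K μ) {M : ℕ} {v : Fin M → β}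
    (hv : v.Injective) {p : Fin M → ℝ≥0∞} (hp : ∀ i m, μ (K i ⁻¹' {v m}) = p m) (n : ℕ) :
    μ {ω | ∀ m, ∃ i < n, K i ω = v m} ≤ n ^ M * ∏ m, p m := by
  have hcover : {ω | ∀ m, ∃ i < n, K i ω = v m} ⊆
      ⋃ idx : Fin M → Fin n, ⋂ m, K (idx m) ⁻¹' {v m} := by
    intro ω hω
    choose i hi hKi using hω
    exact Set.mem_iUnion.2 ⟨fun m => ⟨i m, hi m⟩, Set.mem_iInter.2 hKi⟩
  have hterm (idx : Fin M → Fin n) : μ (⋂ m, K (idx m) ⁻¹' {v m}) ≤ ∏ m, p m := by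
    by_cases hidx : Function.Injective fun m => (idx m : ℕ)
    · rw [(hK.precomp hidx).meas_iInter fun m => ⟨{v m}, measurableSet_singleton _, rfl⟩]
      exact (Finset.prod_congr rfl fun m _ => hp _ m).le
    · obtain ⟨a, b, hab, hne⟩ : ∃ a b, (idx a : ℕ) = idx b ∧ a ≠ b := by
        simpa [Function.Injective] using hidx
      have hempty : (⋂ m, K (idx m) ⁻¹' {v m}) = ∅ := by
        refine Set.eq_empty_of_forall_notMem fun ω hω => hne (hv ?_)
        simp only [Set.mem_iInter, Set.mem_preimage, Set.mem_singleton_iff] at hω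
        rw [← hω a, ← hω b, hab]
      simp [hempty]
  calc μ {ω | ∀ m, ∃ i < n, K i ω = v m}
      ≤ ∑' idx : Fin M → Fin n, μ (⋂ m, K (idx m) ⁻¹' {v m}) :=
        (measure_mono hcover).trans (measure_iUnion_le _)
    _ ≤ ∑' _ : Fin M → Fin n, ∏ m, p m := ENNReal.tsum_le_tsum hterm
    _ = n ^ M * ∏ m, p m := by simp [tsum_fintype]

end UnionBound

theorem measure_le_santaU_le {Ω : Type*} [MeasurableSpace Ω] {μ : Measure Ω} {K : ℕ → Ω → ℕ}
    (hK : iIndepFun K μ) {α ζ : ℝ} (hζ : 0 < ζ)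
    (hdist : ∀ i k : ℕ, 1 ≤ k → μ {ω | K i ω = k} = ENNReal.ofReal ((k : ℝ) ^ (-α) / ζ))
    (n M : ℕ) :
    μ {ω | M ≤ santaU K n ω} ≤
      ENNReal.ofReal ((n : ℝ) ^ M * ((M ! : ℝ) ^ (-α) / ζ ^ M)) := by
  have hv : Function.Injective fun m : Fin M => (m : ℕ) + 1 :=
    fun a b h => Fin.ext (by simpa using h)
  calc μ {ω | M ≤ santaU K n ω} ≤ μ {ω | ∀ m : Fin M, ∃ i < n, K i ω = m + 1} :=
        measure_mono fun ω hω m => exists_lt_eq_of_le_santaU hω (by omega) m.isLt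
    _ ≤ n ^ M * ∏ m : Fin M, ENNReal.ofReal ((((m : ℕ) + 1 : ℕ) : ℝ) ^ (-α) / ζ) :=
        measure_forall_exists_lt_eq_le hK hv (fun i m => hdist i _ (by omega)) n
    _ = ENNReal.ofReal ((n : ℝ) ^ M * ((M ! : ℝ) ^ (-α) / ζ ^ M)) := by
        rw [Fin.prod_univ_eq_prod_range
            (fun m => ENNReal.ofReal (((m + 1 : ℕ) : ℝ) ^ (-α) / ζ)),
          ← ENNReal.ofReal_prod_of_nonneg (fun _ _ => by positivity), Finset.prod_div_distrib,
          Finset.prod_const, Finset.card_range,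
          Real.finsetProd_rpow _ _ (fun _ _ => by positivity), ← Nat.cast_prod,
          Finset.prod_range_add_one_eq_factorial, ENNReal.ofReal_mul (by positivity),
          ENNReal.ofReal_pow n.cast_nonneg, ENNReal.ofReal_natCast]

lemma div_exp_one_pow_le_factorial (M : ℕ) : ((M : ℝ) / exp 1) ^ M ≤ M ! := by
  have h := pow_div_factorial_le_exp (M : ℝ) M.cast_nonneg M
  rw [div_le_iff₀ (by positivity), ← exp_one_pow] at h
  rwa [div_pow, div_le_iff₀ (by positivity), mul_comm]

lemma pow_mul_factorial_rpow_neg_div_le {α ζ C : ℝ} (hα : 0 < α) (hζ : 0 < ζ) (hC : 0 < C)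
    {n M : ℕ} (hM : C * (n : ℝ) ^ (1 / α) ≤ M) :
    (n : ℝ) ^ M * ((M ! : ℝ) ^ (-α) / ζ ^ M) ≤ ((ζ * (C / exp 1) ^ α) ^ M)⁻¹ := by
  have hbase : (C / exp 1) ^ α * n ≤ ((M : ℝ) / exp 1) ^ α := by
    calc (C / exp 1) ^ α * n = (C * (n : ℝ) ^ (1 / α) / exp 1) ^ α := by
          rw [mul_div_right_comm, mul_rpow (by positivity) (by positivity), one_div,
            rpow_inv_rpow n.cast_nonneg hα.ne']
      _ ≤ ((M : ℝ) / exp 1) ^ α := by gcongr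
  have hkey : ((ζ * (C / exp 1) ^ α) * n) ^ M ≤ ζ ^ M * (M ! : ℝ) ^ α :=
    calc ((ζ * (C / exp 1) ^ α) * n) ^ M = ζ ^ M * ((C / exp 1) ^ α * n) ^ M := by
          rw [mul_assoc, mul_pow]
      _ ≤ ζ ^ M * (((M : ℝ) / exp 1) ^ α) ^ M := by gcongr
      _ = ζ ^ M * (((M : ℝ) / exp 1) ^ M) ^ α := by
          rw [← rpow_mul_natCast (by positivity), ← rpow_natCast_mul (by positivity),
            mul_comm α]
      _ ≤ ζ ^ M * (M ! : ℝ) ^ α := by gcongr; exact div_exp_one_pow_le_factorial M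
  calc (n : ℝ) ^ M * ((M ! : ℝ) ^ (-α) / ζ ^ M)
        = (n : ℝ) ^ M / (ζ ^ M * (M ! : ℝ) ^ α) := by
        rw [rpow_neg (by positivity)]; field_simp
    _ ≤ ((ζ * (C / exp 1) ^ α) ^ M)⁻¹ := by
        rw [div_le_iff₀ (by positivity), inv_mul_eq_div, le_div_iff₀ (by positivity), ← mul_pow,
          mul_comm]
        exact hkey

lemma inv_pow_le_exp_neg_mul {c x : ℝ} (hc : 1 ≤ c) {M : ℕ} (hM : x ≤ M) :
    (c ^ M)⁻¹ ≤ exp (-log c * x) := by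
  rw [← exp_log (pow_pos (zero_lt_one.trans_le hc) M), ← exp_neg, Real.log_pow]
  exact exp_le_exp.2 (by nlinarith [log_nonneg hc])

theorem measure_ceil_le_santaU_le_exp {Ω : Type*} [MeasurableSpace Ω] {μ : Measure Ω}
    {K : ℕ → Ω → ℕ} (hK : iIndepFun K μ) {α ζ C : ℝ} (hα : 0 < α) (hζ : 0 < ζ) (hC : 0 < C)
    (hc : 1 ≤ ζ * (C / exp 1) ^ α)
    (hdist : ∀ i k : ℕ, 1 ≤ k → μ {ω | K i ω = k} = ENNReal.ofReal ((k : ℝ) ^ (-α) / ζ))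
    (n : ℕ) :
    μ {ω | ⌈C * (n : ℝ) ^ (1 / α)⌉₊ ≤ santaU K n ω} ≤
      ENNReal.ofReal (exp (-(log (ζ * (C / exp 1) ^ α) * C) * (n : ℝ) ^ (1 / α))) := by
  have hM := Nat.le_ceil (C * (n : ℝ) ^ (1 / α))
  refine (measure_le_santaU_le hK hζ hdist n _).trans (ENNReal.ofReal_le_ofReal ?_)
  calc _ ≤ ((ζ * (C / exp 1) ^ α) ^ ⌈C * (n : ℝ) ^ (1 / α)⌉₊)⁻¹ :=
        pow_mul_factorial_rpow_neg_div_le hα hζ hC hM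
    _ ≤ exp (-log (ζ * (C / exp 1) ^ α) * (C * (n : ℝ) ^ (1 / α))) :=
        inv_pow_le_exp_neg_mul hc hM
    _ = exp (-(log (ζ * (C / exp 1) ^ α) * C) * (n : ℝ) ^ (1 / α)) := by ring_nf

lemma summable_exp_neg_mul_rpow {δ p : ℝ} (hδ : 0 < δ) (hp : 0 < p) :
    Summable fun n : ℕ => exp (-δ * (n : ℝ) ^ p) := by
  have hlim : Tendsto (fun n : ℕ => (n : ℝ) ^ p) atTop atTop :=
    (tendsto_rpow_atTop hp).comp tendsto_natCast_atTop_atTop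
  have ho := (isLittleO_exp_neg_mul_rpow_atTop hδ (-2 / p)).comp_tendsto hlim
  refine summable_of_isBigO_nat (Real.summable_nat_rpow.2 (by norm_num : (-2 : ℝ) < -1))
    (ho.isBigO.congr_right fun n => ?_)
  simp only [Function.comp, ← rpow_mul n.cast_nonneg]
  field_simp

lemma tsum_add_one_rpow_neg_pos {α : ℝ} (hα : 1 < α) :
    0 < ∑' j : ℕ, ((j : ℝ) + 1) ^ (-α) := by
  have hs : Summable fun j : ℕ => ((j : ℝ) + 1) ^ (-α) := by
    simpa using (summable_nat_add_iff 1).2 (Real.summable_nat_rpow.2 (by linarith : -α < -1))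
  exact hs.tsum_pos (fun _ => by positivity) 0 (by positivity)

lemma one_lt_mul_div_exp_one_rpow {α ζ C : ℝ} (hα : 0 < α) (hζ : 0 < ζ)
    (hC : exp 1 * ζ ^ (-(1 / α)) < C) : 1 < ζ * (C / exp 1) ^ α := by
  have h : ζ ^ (-(1 / α)) < C / exp 1 := by rwa [lt_div_iff₀ (exp_pos 1), mul_comm]
  have h' : ζ⁻¹ < (C / exp 1) ^ α := by
    calc ζ⁻¹ = (ζ ^ (-(1 / α))) ^ α := by
          rw [← rpow_mul hζ.le, neg_mul, one_div, inv_mul_cancel₀ hα.ne', rpow_neg_one]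
      _ < (C / exp 1) ^ α := by gcongr
  rwa [inv_lt_iff_one_lt_mul₀ hζ, mul_comm] at h'

theorem santa_fe_upper_general {Ω : Type*} [MeasurableSpace Ω]
    (μ : Measure Ω) [IsProbabilityMeasure μ]
    (K : ℕ → Ω → ℕ)
    (α : ℝ) (hα : 1 < α)
    (hiid : iIndepFun K μ)
    (hdist : ∀ i k : ℕ, 1 ≤ k →
      μ {ω | K i ω = k} =
        ENNReal.ofReal ((k : ℝ) ^ (-α) / ∑' j : ℕ, ((j : ℝ) + 1) ^ (-α)))
    (C : ℝ)
    (hC : C > Real.exp 1 * (∑' j : ℕ, ((j : ℝ) + 1) ^ (-α)) ^ (-(1 / α))) :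
    (∃ δ > (0 : ℝ), ∀ᶠ n : ℕ in atTop,
      μ {ω | ⌈C * (n : ℝ) ^ (1 / α)⌉₊ ≤ santaU K n ω} ≤
        ENNReal.ofReal ((C * (n : ℝ) ^ (1 / α) + 2) *
          Real.exp (-δ * (n : ℝ) ^ (1 / α)))) ∧
    (∑' n : ℕ, μ {ω | ⌈C * (n : ℝ) ^ (1 / α)⌉₊ ≤ santaU K n ω}) < ⊤ ∧
    (∀ᵐ ω ∂μ, ∀ᶠ n : ℕ in atTop,
      santaU K n ω < ⌈C * (n : ℝ) ^ (1 / α)⌉₊) := by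
  set ζ := ∑' j : ℕ, ((j : ℝ) + 1) ^ (-α)
  set c := ζ * (C / exp 1) ^ α
  have hα₀ : 0 < α := zero_lt_one.trans hα
  have hζ : 0 < ζ := tsum_add_one_rpow_neg_pos hα
  have hc : 1 < c := one_lt_mul_div_exp_one_rpow hα₀ hζ hC
  have hC₀ : 0 < C := (mul_pos (exp_pos 1) (rpow_pos_of_pos hζ _)).trans hC
  have hδ : 0 < log c * C := mul_pos (log_pos hc) hC₀
  have hbound := measure_ceil_le_santaU_le_exp hiid hα₀ hζ hC₀ hc.le hdist
  have hsum : (∑' n : ℕ, μ {ω | ⌈C * (n : ℝ) ^ (1 / α)⌉₊ ≤ santaU K n ω}) < ⊤ := by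
    refine (ENNReal.tsum_le_tsum hbound).trans_lt ?_
    rw [← ENNReal.ofReal_tsum_of_nonneg (fun _ => (exp_pos _).le)
      (summable_exp_neg_mul_rpow hδ (by positivity))]
    exact ENNReal.ofReal_lt_top
  refine ⟨⟨log c * C, hδ, Eventually.of_forall fun n =>
    (hbound n).trans (ENNReal.ofReal_le_ofReal ?_)⟩, hsum, ?_⟩
  · have := rpow_nonneg n.cast_nonneg (1 / α)
    exact le_mul_of_one_le_left (exp_pos _).le (by nlinarith)
  · filter_upwards [ae_eventually_notMem hsum.ne] with ω hω
    exact hω.mono fun n hn => not_le.1 hn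

theorem santa_fe_upper {Ω : Type*} [MeasurableSpace Ω]
    (μ : Measure Ω) [IsProbabilityMeasure μ]
    (K : ℕ → Ω → ℕ) (hK : ∀ i, Measurable (K i))
    (α : ℝ) (hα : 1 < α)
    (hiid : iIndepFun K μ)
    (hdist : ∀ i k : ℕ, 1 ≤ k →
      μ {ω | K i ω = k} =
        ENNReal.ofReal ((k : ℝ) ^ (-α) / ∑' j : ℕ, ((j : ℝ) + 1) ^ (-α)))
    (C : ℝ)
    (hC : C > Real.exp 1 * (∑' j : ℕ, ((j : ℝ) + 1) ^ (-α)) ^ (-(1 / α))) :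
    (∃ δ > (0 : ℝ), ∀ᶠ n : ℕ in atTop,
      μ {ω | ⌈C * (n : ℝ) ^ (1 / α)⌉₊ ≤ santaU K n ω} ≤
        ENNReal.ofReal ((C * (n : ℝ) ^ (1 / α) + 2) *
          Real.exp (-δ * (n : ℝ) ^ (1 / α)))) ∧
    (∑' n : ℕ, μ {ω | ⌈C * (n : ℝ) ^ (1 / α)⌉₊ ≤ santaU K n ω}) < ⊤ ∧
    (∀ᵐ ω ∂μ, ∀ᶠ n : ℕ in atTop,
      santaU K n ω < ⌈C * (n : ℝ) ^ (1 / α)⌉₊) :=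
  santa_fe_upper_general μ K α hα hiid hdist C hC
end

section
/- For a string x_1^n over alphabet {1,…,D} and any k strictly greater than the maximal repetition L(x_1^n) = max{m : some string w_1^m occurs at least twice in x_1^n}, the PPM_k probability equals the uniform probability: PPM_k(x_1^n) = D^{−n}. Consequently, the total PPM probability PPM(x_1^n) = (6/π²)∑_{k=−1}^∞ PPM_k(x_1^n)/(k+2)² can be computed as the finite sum (6/π²)∑_{k=0}^{L(x_1^n)} PPM_k(x_1^n)/(k+2)² + (1 − (6/π²)∑_{k=0}^{L(x_1^n)} 1/(k+2)²)·D^{−n}. -/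
/-!
A context of length `k > L(x)` occurs in `x` only once, namely right before the current symbol,
so neither it nor its extension by the current symbol occurs in the strictly shorter prefixes
that PPM counts in. Both counts vanish and every conditional probability is `(0 + 1)/(0 + D)`.
The second claim follows by splitting off `D⁻ⁿ ∑ 1/(j+1)² = D⁻ⁿ π²/6` from the series, which
leaves finitely many nonzero terms.
-/

/-- Number of occurrences of `w` as a substring of `x`. -/
def subCount (D : ℕ) (w x : List (Fin D)) : ℕ :=
  ((Finset.range (x.length + 1 - w.length)).filter
    (fun i => (x.drop i).take w.length = w)).card

/-- Conditional PPM probability of order `k` of symbol `a` given preceding string `p`. -/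
noncomputable def ppmCond (D k : ℕ) (p : List (Fin D)) (a : Fin D) : ℝ :=
  if p.length < k then 1 / D
  else (subCount D (p.drop (p.length - k) ++ [a]) p + 1) /
       (subCount D (p.drop (p.length - k)) p.dropLast + D)

/-- PPM probability of order `k` of the string `x`. -/
noncomputable def ppmK (D k n : ℕ) (x : Fin n → Fin D) : ℝ :=
  ∏ i : Fin n, ppmCond D k ((List.ofFn x).take i) (x i)

/-- Maximal repetition: the largest length of a substring occurring at least twice. -/
noncomputable def maxRep (D n : ℕ) (x : Fin n → Fin D) : ℕ :=
  sSup {m : ℕ | ∃ w : List (Fin D), w.length = m ∧ 2 ≤ subCount D w (List.ofFn x)}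

/-- The total PPM probability `(6/π²) ∑_{k=-1}^∞ PPM_k(x)/(k+2)²`,
reindexed by `j = k + 1` with `PPM_{-1}(x) = D^{-n}`. -/
noncomputable def ppmTotal (D n : ℕ) (x : Fin n → Fin D) : ℝ :=
  (6 / Real.pi ^ 2) * ∑' j : ℕ,
    (if j = 0 then ((D : ℝ) ^ n)⁻¹ else ppmK D (j - 1) n x) / ((j : ℝ) + 1) ^ 2

section Occurrences

variable {D : ℕ}

theorem subCount_eq_zero_of_length_lt {w l : List (Fin D)} (h : l.length < w.length) :
    subCount D w l = 0 := by
  simp [subCount, Nat.sub_eq_zero_of_le (Nat.succ_le_of_lt h)]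

theorem subCount_take_lt_of_suffix {w l : List (Fin D)} {m : ℕ} (hw : w ≠ [])
    (hm : m < l.length) (hsuf : w <:+ l.take (m + 1)) :
    subCount D w (l.take m) < subCount D w l := by
  have hlen : w.length ≤ m + 1 := by simpa [Nat.succ_le_of_lt hm] using hsuf.length_le
  have hpos : 0 < w.length := List.length_pos_iff.mpr hw
  have hsuf' : w = (l.take (m + 1)).drop (m + 1 - w.length) := by
    simpa [Nat.succ_le_of_lt hm] using List.suffix_iff_eq_drop.mp hsuf
  set b := m + 1 - w.length
  have hocc : (l.drop b).take w.length = w :=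
    calc (l.drop b).take w.length = (l.take (m + 1)).drop b := by
          rw [List.drop_take]; congr 1; omega
      _ = w := hsuf'.symm
  unfold subCount
  apply Finset.card_lt_card
  refine Finset.ssubset_iff_of_subset ?_ |>.mpr ⟨b, ?_, ?_⟩
  · intro j
    simp only [Finset.mem_filter, Finset.mem_range, List.length_take]
    refine fun ⟨hj, hoccj⟩ => ⟨by omega, ?_⟩
    rwa [List.drop_take, List.take_take, Nat.min_eq_left (by omega)] at hoccj
  · simp only [Finset.mem_filter, Finset.mem_range]
    exact ⟨by omega, hocc⟩
  · simp only [Finset.mem_filter, Finset.mem_range, List.length_take]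
    omega

end Occurrences

section Repetitions

variable {D n : ℕ} (x : Fin n → Fin D)

theorem bddAbove_repeatedLengths :
    BddAbove {m : ℕ | ∃ w : List (Fin D), w.length = m ∧ 2 ≤ subCount D w (List.ofFn x)} := by
  refine ⟨n, fun m ⟨w, hw, htwo⟩ => ?_⟩
  by_contra! hlong
  rw [subCount_eq_zero_of_length_lt (by simpa [hw] using hlong)] at htwo
  omega

theorem subCount_le_one_of_maxRep_lt {w : List (Fin D)} (hw : maxRep D n x < w.length) :
    subCount D w (List.ofFn x) ≤ 1 := by
  by_contra! htwo
  exact (le_csSup (bddAbove_repeatedLengths x) ⟨w, rfl, htwo⟩).not_gt hw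

theorem subCount_take_eq_zero_of_maxRep_lt {w : List (Fin D)} {m : ℕ}
    (hw : maxRep D n x < w.length) (hm : m < n) (hsuf : w <:+ (List.ofFn x).take (m + 1)) :
    subCount D w ((List.ofFn x).take m) = 0 := by
  have hne : w ≠ [] := List.ne_nil_of_length_pos (by omega)
  have := subCount_take_lt_of_suffix hne (by simpa using hm) hsuf
  have := subCount_le_one_of_maxRep_lt x hw
  omega

theorem ppmCond_eq_inv_of_maxRep_lt {k : ℕ} (hk : maxRep D n x < k) (i : Fin n) :
    ppmCond D k ((List.ofFn x).take i) (x i) = (D : ℝ)⁻¹ := by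
  set l := List.ofFn x
  have hil : (i : ℕ) < l.length := by simp [l]
  have hp : (l.take i).length = i := by simp [l]
  unfold ppmCond
  split_ifs with hshort
  · exact one_div _
  set ctx := (l.take i).drop ((l.take i).length - k)
  have hctx : ctx.length = k := by simp only [ctx, List.length_drop, hp]; omega
  have hsuf : ctx <:+ l.take i := List.drop_suffix _ _
  have hnum : subCount D (ctx ++ [x i]) (l.take i) = 0 := by
    refine subCount_take_eq_zero_of_maxRep_lt x (by simp [hctx]; omega) i.2 ?_
    rw [List.take_succ_eq_append_getElem hil, List.getElem_ofFn]
    exact List.suffix_append_self_iff.mpr hsuf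
  have hden : subCount D ctx (l.take i).dropLast = 0 := by
    rw [List.dropLast_take hil]
    refine subCount_take_eq_zero_of_maxRep_lt x (by omega) (by omega) ?_
    rwa [Nat.sub_add_cancel (by omega)]
  rw [hnum, hden]
  simp

theorem ppmK_eq_of_maxRep_lt {k : ℕ} (hk : maxRep D n x < k) :
    ppmK D k n x = ((D : ℝ) ^ n)⁻¹ := by
  simp [ppmK, ppmCond_eq_inv_of_maxRep_lt x hk]

end Repetitions

theorem hasSum_one_div_succ_sq :
    HasSum (fun j : ℕ => 1 / ((j : ℝ) + 1) ^ 2) (Real.pi ^ 2 / 6) := by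
  simpa using (hasSum_nat_add_iff' 1).mpr hasSum_zeta_two

theorem tsum_div_succ_sq_of_eq_of_le {a : ℕ → ℝ} {c : ℝ} {N : ℕ} (h : ∀ j, N ≤ j → a j = c) :
    ∑' j, a j / ((j : ℝ) + 1) ^ 2 =
      ∑ j ∈ Finset.range N, (a j - c) / ((j : ℝ) + 1) ^ 2 + c * (Real.pi ^ 2 / 6) := by
  have hconst : HasSum (fun j : ℕ => c / ((j : ℝ) + 1) ^ 2) (c * (Real.pi ^ 2 / 6)) := by
    simpa only [mul_one_div] using hasSum_one_div_succ_sq.mul_left c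
  have hdiff : HasSum (fun j : ℕ => (a j - c) / ((j : ℝ) + 1) ^ 2)
      (∑ j ∈ Finset.range N, (a j - c) / ((j : ℝ) + 1) ^ 2) :=
    hasSum_sum_of_ne_finset_zero fun j hj => by
      rw [h j (by simpa using hj), sub_self, zero_div]
  refine ((hdiff.add hconst).congr_fun fun j => ?_).tsum_eq
  ring

theorem ppm_finite_sum_general (D : ℕ) (n : ℕ) (x : Fin n → Fin D) :
    (∀ k : ℕ, maxRep D n x < k → ppmK D k n x = ((D : ℝ) ^ n)⁻¹) ∧
    ppmTotal D n x =
      (6 / Real.pi ^ 2) * (∑ k ∈ Finset.range (maxRep D n x + 1),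
        ppmK D k n x / ((k : ℝ) + 2) ^ 2) +
      (1 - (6 / Real.pi ^ 2) * ∑ k ∈ Finset.range (maxRep D n x + 1),
        1 / ((k : ℝ) + 2) ^ 2) * ((D : ℝ) ^ n)⁻¹ := by
  refine ⟨fun k hk => ppmK_eq_of_maxRep_lt x hk, ?_⟩
  set u : ℝ := ((D : ℝ) ^ n)⁻¹
  have heq : ∀ j, maxRep D n x + 2 ≤ j →
      (if j = 0 then u else ppmK D (j - 1) n x) = u := fun j hj => by
    rw [if_neg (by omega), ppmK_eq_of_maxRep_lt x (by omega)]
  rw [ppmTotal, tsum_div_succ_sq_of_eq_of_le heq, Finset.sum_range_succ']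
  simp only [if_pos, Nat.succ_ne_zero, if_false, Nat.add_sub_cancel, sub_self, zero_div,
    add_zero, Nat.cast_succ, add_assoc, one_add_one_eq_two, sub_div, Finset.sum_sub_distrib]
  rw [Finset.sum_congr rfl fun k _ => div_eq_mul_one_div u _, ← Finset.mul_sum]
  field_simp
  ring

theorem ppm_finite_sum (D : ℕ) (hD : 1 ≤ D) (n : ℕ) (x : Fin n → Fin D) :
    (∀ k : ℕ, maxRep D n x < k → ppmK D k n x = ((D : ℝ) ^ n)⁻¹) ∧
    ppmTotal D n x =
      (6 / Real.pi ^ 2) * (∑ k ∈ Finset.range (maxRep D n x + 1),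
        ppmK D k n x / ((k : ℝ) + 2) ^ 2) +
      (1 - (6 / Real.pi ^ 2) * ∑ k ∈ Finset.range (maxRep D n x + 1),
        1 / ((k : ℝ) + 2) ^ 2) * ((D : ℝ) ^ n)⁻¹ :=
  ppm_finite_sum_general D n x
end
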